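/- arXiv:math/0703498 — 4 statements merged into one kernel-verified Lean document; each statement's English description precedes it below -/
import Mathlib

section
/- For every odd prime p, φ(3^p - 1)/p > 3^((p-1)/2), i.e., φ(3^p - 1) > p · 3^((p-1)/2). -/
lemma aux_pow (a : ℕ) : ∀ k ≤ a, (a+1)^k * (a - k) ≤ a^(k+1) := by
  intro k
  induction k with
  | zero => simp
  | succ k ih =>
    intro hk
    have h1 := ih (le_of_lt (by omega))
    calc (a+1)^(k+1) * (a - (k+1)) = (a+1)^k * ((a+1) * (a - (k+1))) := by ring
      _ ≤ (a+1)^k * (a * (a - k)) := by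
          apply Nat.mul_le_mul_left
          have : (a+1) * (a - (k+1)) + (k+1) ≤ a * (a - k) + k + 1 := by
            have h2 : k + 1 ≤ a := hk
            nlinarith [Nat.sub_add_cancel h2, Nat.sub_add_cancel (le_of_lt (by omega : k < a))]
          omega
      _ = a * ((a+1)^k * (a - k)) := by ring
      _ ≤ a * a^(k+1) := Nat.mul_le_mul_left _ h1
      _ = a^(k+2) := by ring

lemma aux_exp : ∀ n, 6 ≤ n → 4 * (n+1)^2 ≤ 3^n := by
  intro n hn
  induction n, hn using Nat.le_induction with
  | base => norm_num
  | succ n hn ih =>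
    have : 4 * (n+2)^2 ≤ 3 * (4 * (n+1)^2) := by nlinarith
    calc 4 * (n+1+1)^2 ≤ 3 * (4*(n+1)^2) := this
      _ ≤ 3 * 3^n := by omega
      _ = 3^(n+1) := by ring

theorem totient_three_pow_sub_one (p : ℕ) (hp : p.Prime) (hodd : Odd p) :
    p * 3 ^ ((p - 1) / 2) < Nat.totient (3 ^ p - 1) := by
  rcases lt_or_ge p 7 with h7 | h7
  · have h2 := hp.two_le
    interval_cases p
    · exact absurd hodd (by decide)
    · decide
    · exact absurd hp (by decide)
    · decide
    · exact absurd hp (by decide)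
  · -- main case : p ≥ 7
    have hppos : 0 < p := by omega
    have h3odd : Odd (3^p) := Odd.pow (by decide)
    have h3mod : 3^p % 2 = 1 := Nat.odd_iff.mp h3odd
    have h3big : 3 * 3^(p-1) = 3^p := by
      rw [← pow_succ']
      congr 1
      omega
    have h3ge : 2 ≤ 3^p := by
      calc 2 ≤ 3^1 := by norm_num
        _ ≤ 3^p := Nat.pow_le_pow_right (by norm_num) (by omega)
    set m := (3^p - 1)/2 with hmdef
    have hm2 : 2 * m = 3^p - 1 := Nat.mul_div_cancel' (by omega)
    have hmpos : 0 < m := by omega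
    -- m is odd
    have hmodd : ¬ 2 ∣ m := by
      intro ⟨c, hc⟩
      have h4 : 4 ∣ 3^p - 1 := ⟨c, by omega⟩
      have : ((3^p - 1 : ℕ) : ZMod 4) = 0 := (ZMod.natCast_eq_zero_iff _ _).mpr h4
      rw [Nat.cast_sub (by omega), Nat.cast_pow, Nat.cast_one] at this
      have h34 : ((3:ℕ) : ZMod 4) = -1 := by decide
      rw [h34, hodd.neg_one_pow] at this
      revert this; decide
    -- every prime factor of m is ≥ 2p+1
    have hq : ∀ q ∈ m.primeFactors, 2*p + 1 ≤ q := by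
      intro q hqmem
      have hqp : q.Prime := Nat.prime_of_mem_primeFactors hqmem
      haveI : Fact q.Prime := ⟨hqp⟩
      have hqdvdm : q ∣ m := Nat.dvd_of_mem_primeFactors hqmem
      have hqdvd : q ∣ 3^p - 1 := hqdvdm.trans ⟨2, by omega⟩
      have hqne2 : q ≠ 2 := by rintro rfl; exact hmodd hqdvdm
      have hq1 : (3 : ZMod q)^p = 1 := by
        have h0 : ((3^p - 1 : ℕ) : ZMod q) = 0 := (ZMod.natCast_eq_zero_iff _ _).mpr hqdvd
        rw [Nat.cast_sub (by omega), Nat.cast_pow, Nat.cast_one, sub_eq_zero] at h0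
        exact_mod_cast h0
      have hord : orderOf (3 : ZMod q) = p := by
        rcases hp.eq_one_or_self_of_dvd _ (orderOf_dvd_of_pow_eq_one hq1) with h1 | h
        · exfalso
          have h31 : (3 : ZMod q) = 1 := orderOf_eq_one_iff.mp h1
          have : ((2:ℕ) : ZMod q) = 0 := by
            have : ((3:ℕ) : ZMod q) - 1 = 0 := by push_cast; rw [h31]; ring
            calc ((2:ℕ) : ZMod q) = ((3:ℕ) : ZMod q) - 1 := by push_cast; ring
              _ = 0 := this
          have hd2 := (ZMod.natCast_eq_zero_iff _ _).mp this
          have := Nat.le_of_dvd (by norm_num) hd2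
          have := hqp.two_le
          exact hqne2 (by omega)
        · exact h
      have h3ne : (3 : ZMod q) ≠ 0 := by
        intro h0
        rw [h0, zero_pow (by omega)] at hq1
        exact zero_ne_one hq1
      have hpdvd : p ∣ q - 1 := hord ▸ orderOf_dvd_of_pow_eq_one (ZMod.pow_card_sub_one_eq_one h3ne)
      have hq2 : 2 ∣ q - 1 := by
        have := hqp.two_le
        have hqodd : q % 2 = 1 := Nat.odd_iff.mp (hqp.odd_of_ne_two hqne2)
        omega
      have h2p : 2 * p ∣ q - 1 :=
        Nat.Coprime.mul_dvd_of_dvd_of_dvd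
          ((Nat.coprime_primes Nat.prime_two hp).mpr (by omega)) hq2 hpdvd
      have := Nat.le_of_dvd (by have := hqp.two_le; omega) h2p
      omega
    set ω := m.primeFactors.card with hω
    -- ω ≤ p
    have hrad : (2*p+1)^ω ≤ m := by
      calc (2*p+1)^ω = ∏ _q ∈ m.primeFactors, (2*p+1) := (Finset.prod_const _).symm
        _ ≤ ∏ q ∈ m.primeFactors, q := Finset.prod_le_prod' hq
        _ ≤ m := Nat.le_of_dvd hmpos (Nat.prod_primeFactors_dvd m)
    have hωp : ω ≤ p := by
      by_contra hc
      push_neg at hc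
      have h1 : (2*p+1)^p < (2*p+1)^ω := Nat.pow_lt_pow_right (by omega) hc
      have h2 : 3^p ≤ (2*p+1)^p := Nat.pow_le_pow_left (by omega) p
      omega
    -- multiplicative bound
    have hsupp : m.factorization.support = m.primeFactors := Nat.support_factorization m
    have hmul : (2*p)^ω * m ≤ (2*p+1)^ω * Nat.totient m := by
      conv_lhs => rw [← Nat.factorization_prod_pow_eq_self hmpos.ne']
      rw [Nat.totient_eq_prod_factorization hmpos.ne']
      rw [Finsupp.prod, Finsupp.prod, hsupp, hω]
      rw [← Finset.prod_const (2*p), ← Finset.prod_const (2*p+1),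
        ← Finset.prod_mul_distrib, ← Finset.prod_mul_distrib]
      apply Finset.prod_le_prod'
      intro q hqmem
      have hq21 := hq q hqmem
      have hk : 1 ≤ m.factorization q := by
        have := Nat.Prime.factorization_pos_of_dvd (Nat.prime_of_mem_primeFactors hqmem)
          hmpos.ne' (Nat.dvd_of_mem_primeFactors hqmem)
        omega
      set k := m.factorization q
      have hqpos : 0 < q := by omega
      have hqk : q^k = q^(k-1) * q := by
        rw [← pow_succ]
        congr 1
        omega
      calc 2*p * q^k = q^(k-1) * (2*p*q) := by rw [hqk]; ring
        _ ≤ q^(k-1) * ((2*p+1)*(q-1)) := by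
            apply Nat.mul_le_mul_left
            have : q - 1 + 1 = q := by omega
            nlinarith [this]
        _ = (2*p+1) * (q^(k-1)*(q-1)) := by ring
    -- m ≤ 2 φ m
    have h2φ : m ≤ 2 * Nat.totient m := by
      have ha := aux_pow (2*p) ω (by omega)
      have hb : p ≤ 2*p - ω := by omega
      have hc : p * (2*p+1)^ω ≤ 2*p * (2*p)^ω := by
        calc p * (2*p+1)^ω ≤ (2*p+1)^ω * (2*p - ω) := by
              rw [mul_comm]; exact Nat.mul_le_mul_left _ hb
          _ ≤ (2*p)^(ω+1) := ha
          _ = 2*p * (2*p)^ω := by rw [pow_succ]; ring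
      have hd : (2*p+1)^ω ≤ 2 * (2*p)^ω := by
        have hppos' : 0 < p := hppos
        nlinarith [hc]
      have he : (2*p)^ω * m ≤ (2*p)^ω * (2 * Nat.totient m) := by
        calc (2*p)^ω * m ≤ (2*p+1)^ω * Nat.totient m := hmul
          _ ≤ 2 * (2*p)^ω * Nat.totient m := Nat.mul_le_mul_right _ hd
          _ = (2*p)^ω * (2 * Nat.totient m) := by ring
      exact Nat.le_of_mul_le_mul_left he (pow_pos (by omega : 0 < 2*p) ω)
    -- size bounds
    have h3pm1 : 3 ≤ 3^(p-1) := by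
      calc 3 = 3^1 := (pow_one 3).symm
        _ ≤ 3^(p-1) := Nat.pow_le_pow_right (by norm_num) (by omega)
    have hmlb : 3^(p-1) + 1 ≤ m := by omega
    have hm4p : 4 * p^2 ≤ 3^(p-1) := by
      have hexp := aux_exp (p-1) (by omega)
      have hp11 : p - 1 + 1 = p := by omega
      rwa [hp11] at hexp
    -- final
    have htot : Nat.totient (3^p - 1) = Nat.totient m := by
      rw [← hm2, Nat.totient_mul, Nat.totient_two, one_mul]
      exact (Nat.coprime_two_left).mpr (Nat.odd_iff.mpr (by omega))
    rw [htot]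
    have hsq3 : 3^((p-1)/2) * 3^((p-1)/2) = 3^(p-1) := by
      rw [← pow_add]
      congr 1
      have : 2 ∣ p - 1 := by
        rcases hodd with ⟨j, hj⟩; omega
      omega
    have hfin : (2 * (p * 3^((p-1)/2)))^2 < (2 * Nat.totient m)^2 := by
      calc (2 * (p * 3^((p-1)/2)))^2 = 4*p^2 * (3^((p-1)/2) * 3^((p-1)/2)) := by ring
        _ = 4*p^2 * 3^(p-1) := by rw [hsq3]
        _ < (4*p^2) * m := by
            have h4p : 0 < 4*p^2 := by positivity
            exact mul_lt_mul_of_pos_left (by omega) h4p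
        _ ≤ m * m := Nat.mul_le_mul_right m (by nlinarith [hm4p, hmlb])
        _ ≤ (2 * Nat.totient m) * (2 * Nat.totient m) := Nat.mul_le_mul h2φ h2φ
        _ = (2 * Nat.totient m)^2 := by ring
    have := lt_of_pow_lt_pow_left₀ 2 (Nat.zero_le _) hfin
    omega
end

section
/- Let F be a finite field of odd cardinality q, let E be a quadratic extension of F, and let x ∈ E with x ∉ F. Denote by x̄ the Galois conjugate of x, so that t = x + x̄ ∈ F. Then the matrices A = [[0, -1], [1, t]] and A⁻¹ = [[t, 1], [-1, 0]] are conjugate in SL(2, F). -/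
open Polynomial Matrix

theorem conj_to_inverse_C8 (F : Type*) [Field F] [Fintype F]
    (hodd : Odd (Fintype.card F)) (t : F)
    (hirr : Irreducible (X ^ 2 - C t * X + 1 : F[X])) :
    ∀ (A : Matrix.SpecialLinearGroup (Fin 2) F),
      (A : Matrix (Fin 2) (Fin 2) F) = !![0, -1; 1, t] →
      ∃ S : Matrix.SpecialLinearGroup (Fin 2) F, S * A * S⁻¹ = A⁻¹ := by
  intro A hA
  have hcard : Fintype.card F % 2 = 1 := Nat.odd_iff.mp hodd
  have hchar : ringChar F ≠ 2 := by
    intro h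
    have := FiniteField.even_card_of_char_two h
    omega
  have h2 : (2 : F) ≠ 0 := Ring.two_ne_zero hchar
  have h4 : (4 : F) ≠ 0 := by
    intro h
    apply h2
    have : (2 : F) * 2 = 0 := by rw [← h]; norm_num
    rcases mul_eq_zero.mp this with h' | h' <;> exact h'
  -- 4 - t^2 ≠ 0
  have hd : (4 : F) - t ^ 2 ≠ 0 := by
    intro h
    have hroot : (X ^ 2 - C t * X + 1 : F[X]).IsRoot (t / 2) := by
      simp only [IsRoot, eval_add, eval_sub, eval_mul, eval_pow, eval_C, eval_X, eval_one]
      field_simp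
      linear_combination h
    obtain ⟨q, hq⟩ := (dvd_iff_isRoot).mpr hroot
    have hdeg : (X ^ 2 - C t * X + 1 : F[X]).degree = 2 := by
      compute_degree!
    rcases hirr.isUnit_or_isUnit hq with h' | h'
    · exact (Polynomial.not_isUnit_X_sub_C _) h'
    · have hq0 : q.degree = 0 := Polynomial.degree_eq_zero_of_isUnit h'
      have : ((X - C (t / 2)) * q : F[X]).degree = 1 := by
        rw [Polynomial.degree_mul, hq0, Polynomial.degree_X_sub_C]
        rfl
      rw [← hq, hdeg] at this
      exact (by norm_num : (2 : WithBot ℕ) ≠ 1) this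
  obtain ⟨u, v, huv⟩ := FiniteField.exists_root_sum_quadratic
    (f := (X ^ 2 + C 4 : F[X])) (g := (C (4 - t ^ 2) * X ^ 2 : F[X]))
    (Polynomial.degree_X_pow_add_C (by norm_num) 4)
    (Polynomial.degree_C_mul_X_pow 2 hd) hcard
  simp only [eval_add, eval_mul, eval_pow, eval_C, eval_X] at huv
  obtain ⟨a, ha⟩ : ∃ x : F, x = (u - v * t) / 2 := ⟨_, rfl⟩
  have h2a : 2 * a = u - v * t := by rw [ha]; field_simp
  have hkey : a ^ 2 + a * v * t + v ^ 2 = -1 := by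
    have h44 : (4 : F) * (a ^ 2 + a * v * t + v ^ 2) = 4 * (-1) := by
      linear_combination (2 * a + u + v * t) * h2a + huv
    exact mul_left_cancel₀ h4 h44
  have hdet : (!![v, -a; -(a + v * t), -v] : Matrix (Fin 2) (Fin 2) F).det = 1 := by
    simp [Matrix.det_fin_two_of]
    linear_combination -hkey
  refine ⟨⟨!![v, -a; -(a + v * t), -v], hdet⟩, ?_⟩
  set S : Matrix.SpecialLinearGroup (Fin 2) F := ⟨!![v, -a; -(a + v * t), -v], hdet⟩ with hS
  have hAinv : ((A⁻¹ : Matrix.SpecialLinearGroup (Fin 2) F) : Matrix (Fin 2) (Fin 2) F)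
      = !![t, 1; -1, 0] := by
    rw [Matrix.SpecialLinearGroup.coe_inv, hA]
    simp [Matrix.adjugate_fin_two]
  have h : S * A = A⁻¹ * S := by
    apply Subtype.ext
    show (S : Matrix (Fin 2) (Fin 2) F) * (A : Matrix (Fin 2) (Fin 2) F) = ((A⁻¹ : Matrix.SpecialLinearGroup (Fin 2) F) : Matrix (Fin 2) (Fin 2) F) * (S : Matrix (Fin 2) (Fin 2) F)
    simp only [Matrix.SpecialLinearGroup.coe_mul, hA, hAinv, hS]
    ext i j
    fin_cases i <;> fin_cases j <;>
      simp [Matrix.mul_apply, Fin.sum_univ_succ] <;> ring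
  rw [h, mul_inv_cancel_right]
end

section
/- Let F be a finite field of cardinality q with q = p^n, p an odd prime, and suppose p^(n-1)·(p-2) > 5. Let A = {-(a² + a⁻²) : a ∈ F^×, a is not a root of unity of order 1, 2, 3, 4, or 6}. Then A generates F as an additive group. -/
set_option linter.unusedSectionVars false
set_option linter.unusedVariables false
set_option maxHeartbeats 1000000

open Finset Polynomial

def ASet (F : Type*) [Field F] : Set F :=
  {y : F | ∃ a : F, a ≠ 0 ∧ orderOf a ∉ ({1, 2, 3, 4, 6} : Set ℕ) ∧ y = -(a ^ 2 + (a ^ 2)⁻¹)}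

def SGen (F : Type*) [Field F] : Set F :=
  insert (1 : F) {x : F | ∃ γ : F, γ ≠ 0 ∧ x = γ ^ 2 + (γ ^ 2)⁻¹}

section Helpers

variable {F : Type*} [Field F] [Fintype F]

private lemma card_filter_root_le [DecidableEq F] (P : F[X]) (hP : P ≠ 0) :
    (Finset.univ.filter fun x : F => P.eval x = 0).card ≤ P.natDegree := by
  have hsub : (Finset.univ.filter fun x : F => P.eval x = 0) ⊆ P.roots.toFinset := by
    intro x hx
    simp only [Finset.mem_filter, Finset.mem_univ, true_and] at hx
    simp [Multiset.mem_toFinset, Polynomial.mem_roots, hP, Polynomial.IsRoot, hx]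
  calc (Finset.univ.filter fun x : F => P.eval x = 0).card
      ≤ P.roots.toFinset.card := Finset.card_le_card hsub
    _ ≤ Multiset.card P.roots := Multiset.toFinset_card_le _
    _ ≤ P.natDegree := P.card_roots'

private lemma card_filter_pow_le [DecidableEq F] (m : ℕ) (hm : 0 < m) :
    (Finset.univ.filter fun x : F => x ^ m = 1).card ≤ m := by
  have h := card_filter_root_le (F := F) (X ^ m - C 1) (X_pow_sub_C_ne_zero hm 1)
  rw [natDegree_X_pow_sub_C] at h
  refine le_trans (le_of_eq ?_) h
  congr 1
  ext x
  simp [sub_eq_zero]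

private lemma card_filter_quad_le [DecidableEq F] (b c : F) :
    (Finset.univ.filter fun x : F => x ^ 2 + b * x + c = 0).card ≤ 2 := by
  have hP : (X ^ 2 + C b * X + C c : F[X]) ≠ 0 := by
    intro h
    have h2 := congrArg (fun Q : F[X] => Q.coeff 2) h
    simp [coeff_one] at h2
  have h := card_filter_root_le (F := F) (X ^ 2 + C b * X + C c) hP
  have hdeg : (X ^ 2 + C b * X + C c : F[X]).natDegree = 2 := by compute_degree!
  rw [hdeg] at h
  refine le_trans (le_of_eq ?_) h
  congr 1
  ext x
  simp

private lemma dichot {b c : F} (hb : b ≠ 0) (hc : c ≠ 0) (h : b + b⁻¹ = c + c⁻¹) :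
    b = c ∨ b * c = 1 := by
  have h' : b * b * c + c = b * c * c + b := by
    field_simp at h
    linear_combination h
  have key : (b - c) * (b * c - 1) = 0 := by linear_combination h'
  rcases mul_eq_zero.mp key with h1 | h1
  · exact Or.inl (sub_eq_zero.mp h1)
  · exact Or.inr (sub_eq_zero.mp h1)

private lemma s_of_cube {ζ : F} (h3 : ζ ^ 3 = 1) (h1 : ζ ≠ 1) : ζ + ζ⁻¹ = -1 := by
  have hζ0 : ζ ≠ 0 := by rintro rfl; simp at h3
  have hquad : ζ ^ 2 + ζ + 1 = 0 := by
    have key : (ζ - 1) * (ζ ^ 2 + ζ + 1) = 0 := by linear_combination h3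
    rcases mul_eq_zero.mp key with h | h
    · exact absurd (sub_eq_zero.mp h) h1
    · exact h
  have hinv : ζ⁻¹ = ζ ^ 2 := inv_eq_of_mul_eq_one_right (by linear_combination h3)
  rw [hinv]; linear_combination hquad

private lemma s_of_order12 {γ : F} (h : orderOf γ = 12) : γ ^ 2 + (γ ^ 2)⁻¹ = 1 := by
  have h12 : γ ^ 12 = 1 := by rw [← h]; exact pow_orderOf_eq_one γ
  have h6 : γ ^ 6 ≠ 1 := fun hc => by
    have := orderOf_dvd_of_pow_eq_one hc; rw [h] at this; exact absurd this (by norm_num)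
  have h4 : γ ^ 4 ≠ 1 := fun hc => by
    have := orderOf_dvd_of_pow_eq_one hc; rw [h] at this; exact absurd this (by norm_num)
  set ζ := γ ^ 2 with hζ
  have hc3 : ζ ^ 3 = -1 := by
    have hsq : ζ ^ 3 * (ζ ^ 3) = 1 := by rw [hζ]; rw [← pow_add, ← pow_mul]; norm_num; exact h12
    rcases mul_self_eq_one_iff.mp hsq with hh | hh
    · exact absurd (by rw [hζ, ← pow_mul] at hh; exact hh) h6
    · exact hh
  have hne : ζ ≠ -1 := by
    intro hc
    apply h4
    rw [show (4:ℕ) = 2*2 by rfl, pow_mul, ← hζ, hc]; ring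
  have hquad : ζ ^ 2 - ζ + 1 = 0 := by
    have key : (ζ + 1) * (ζ ^ 2 - ζ + 1) = 0 := by linear_combination hc3
    rcases mul_eq_zero.mp key with hh | hh
    · exact absurd (by linear_combination hh : ζ = -1) hne
    · exact hh
  have hζ0 : ζ ≠ 0 := by
    intro hc; rw [hc] at hc3; norm_num at hc3
  have hinv : ζ⁻¹ = 1 - ζ := inv_eq_of_mul_eq_one_right (by linear_combination -hquad)
  rw [hinv]; ring

private lemma s_mul_ident {γ δ : F} (hγ : γ ≠ 0) (hδ : δ ≠ 0) :
    (γ ^ 2 + (γ ^ 2)⁻¹) * (δ ^ 2 + (δ ^ 2)⁻¹) =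
      ((γ * δ) ^ 2 + ((γ * δ) ^ 2)⁻¹) + ((γ * δ⁻¹) ^ 2 + ((γ * δ⁻¹) ^ 2)⁻¹) := by
  field_simp
  ring

private lemma s_bad {γ : F} (h : orderOf γ ∈ ({1, 2, 3, 4, 6} : Set ℕ)) :
    γ ^ 2 + (γ ^ 2)⁻¹ = 2 ∨ γ ^ 2 + (γ ^ 2)⁻¹ = -2 ∨ γ ^ 2 + (γ ^ 2)⁻¹ = -1 := by
  have hpow : γ ^ orderOf γ = 1 := pow_orderOf_eq_one γ
  simp only [Set.mem_insert_iff, Set.mem_singleton_iff] at h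
  rcases h with h | h | h | h | h
  · left
    have : γ = 1 := orderOf_eq_one_iff.mp h
    rw [this]; norm_num
  · left
    rw [h] at hpow
    rw [hpow]; norm_num
  · right; right
    have h2 : γ ^ 2 ≠ 1 := fun hc => by
      have := orderOf_dvd_of_pow_eq_one hc; rw [h] at this; exact absurd this (by norm_num)
    have h3 : (γ ^ 2) ^ 3 = 1 := by
      rw [h] at hpow
      rw [← pow_mul, show 2*3 = 3*2 by rfl, pow_mul, hpow, one_pow]
    exact s_of_cube h3 h2
  · right; left
    have h2 : γ ^ 2 ≠ 1 := fun hc => by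
      have := orderOf_dvd_of_pow_eq_one hc; rw [h] at this; exact absurd this (by norm_num)
    have h4 : γ ^ 2 * (γ ^ 2) = 1 := by
      rw [← pow_add]; rw [h] at hpow; exact hpow
    have hm1 : γ ^ 2 = -1 := (mul_self_eq_one_iff.mp h4).resolve_left h2
    rw [hm1]; norm_num
  · right; right
    have h2 : γ ^ 2 ≠ 1 := fun hc => by
      have := orderOf_dvd_of_pow_eq_one hc; rw [h] at this; exact absurd this (by norm_num)
    have h3 : (γ ^ 2) ^ 3 = 1 := by
      rw [← pow_mul]; rw [h] at hpow; exact hpow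
    exact s_of_cube h3 h2

private lemma order_pow_helper {γ : F} {ℓ j : ℕ} (hord : orderOf γ = ℓ) (hl : ℓ.Prime)
    (hj1 : 1 ≤ j) (hjm : j < ℓ) : orderOf (γ ^ j) = ℓ := by
  have h1 : (γ ^ j) ^ ℓ = 1 := by
    rw [← pow_mul, mul_comm, pow_mul, ← hord, pow_orderOf_eq_one, one_pow]
  have h2 := orderOf_dvd_of_pow_eq_one h1
  rcases (Nat.Prime.eq_one_or_self_of_dvd hl _ h2) with h | h
  · exfalso
    have hγj : γ ^ j = 1 := orderOf_eq_one_iff.mp h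
    have : ℓ ∣ j := hord ▸ orderOf_dvd_of_pow_eq_one hγj
    have := Nat.le_of_dvd (by omega) this
    omega
  · exact h

private lemma exists_orderOf_eq {e : ℕ} (he : e ∣ Fintype.card F - 1) :
    ∃ γ : F, γ ≠ 0 ∧ orderOf γ = e := by
  classical
  obtain ⟨g, hg⟩ := IsCyclic.exists_generator (α := Fˣ)
  have hcard : orderOf g = Fintype.card F - 1 := by
    rw [orderOf_eq_card_of_forall_mem_zpowers hg, Nat.card_eq_fintype_card, Fintype.card_units]
  set t := Fintype.card F - 1 with ht
  have ht0 : 0 < t := by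
    have : 1 < Fintype.card F := Fintype.one_lt_card
    omega
  refine ⟨((g ^ (t / e) : Fˣ) : F), Units.ne_zero _, ?_⟩
  rw [orderOf_units, orderOf_pow, hcard]
  have h1 : t / e ∣ t := Nat.div_dvd_of_dvd he
  rw [Nat.gcd_eq_right h1]
  exact Nat.div_div_self he ht0.ne'

-- telescoping geometric sum fact
private lemma sum_s_eq_neg_one {δ : F} {ℓ m : ℕ} (hδ1 : δ ≠ 1) (hδl : δ ^ ℓ = 1)
    (hm : ℓ = 2 * m + 1) (hm1 : 1 ≤ m) :
    ∑ j ∈ Finset.range m, (δ ^ (j + 1) + δ ^ (ℓ - (j + 1))) = -1 := by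
  have hkey : (δ - 1) * (∑ j ∈ Finset.range m, (δ ^ (j + 1) + δ ^ (ℓ - (j + 1)))) = (δ - 1) * (-1) := by
    rw [Finset.mul_sum]
    have hterm : ∀ j ∈ Finset.range m,
        (δ - 1) * (δ ^ (j + 1) + δ ^ (ℓ - (j + 1)))
          = (δ ^ (j + 1 + 1) - δ ^ (j + 1)) + (δ ^ (ℓ - j) - δ ^ (ℓ - (j + 1))) := by
      intro j hj
      rw [Finset.mem_range] at hj
      have h1 : δ ^ (j + 1 + 1) = δ ^ (j + 1) * δ := pow_succ δ (j + 1)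
      have h2 : δ ^ (ℓ - j) = δ ^ (ℓ - (j + 1)) * δ := by
        rw [← pow_succ]
        congr 1
        omega
      rw [h1, h2]; ring
    rw [Finset.sum_congr rfl hterm, Finset.sum_add_distrib]
    rw [Finset.sum_range_sub (fun j => δ ^ (j + 1)) m]
    rw [Finset.sum_range_sub' (fun j => δ ^ (ℓ - j)) m]
    have e1 : ℓ - 0 = ℓ := by omega
    have e2 : ℓ - m = m + 1 := by omega
    rw [e1, e2, hδl]
    have : δ ^ (0 + 1) = δ := by ring
    rw [this]
    ring
  have hne : δ - 1 ≠ 0 := sub_ne_zero.mpr hδ1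
  exact mul_left_cancel₀ hne hkey

private lemma prime_notin_bad {ℓ : ℕ} (hl : ℓ.Prime) (h5 : 5 ≤ ℓ) :
    ℓ ∉ ({1, 2, 3, 4, 6} : Set ℕ) := by
  intro hmem
  simp only [Set.mem_insert_iff, Set.mem_singleton_iff] at hmem
  rcases hmem with h | h | h | h | h
  any_goals omega
  · subst h; exact absurd hl (by decide)

private lemma one_mem_of_prime {ℓ : ℕ} (hl : ℓ.Prime) (h5 : 5 ≤ ℓ)
    (hdvd : ℓ ∣ Fintype.card F - 1) :
    (1 : F) ∈ AddSubgroup.closure (ASet F) := by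
  obtain ⟨γ, hγ0, hγord⟩ := exists_orderOf_eq hdvd
  obtain ⟨m, hm⟩ : ∃ m, ℓ = 2 * m + 1 := by
    rcases hl.odd_of_ne_two (by omega) with ⟨m, hm⟩
    exact ⟨m, hm⟩
  have hm1 : 1 ≤ m := by omega
  set δ := γ ^ 2 with hδ
  have hγl : γ ^ ℓ = 1 := by rw [← hγord]; exact pow_orderOf_eq_one γ
  have hδl : δ ^ ℓ = 1 := by rw [hδ, ← pow_mul, mul_comm, pow_mul, hγl, one_pow]
  have hδ1 : δ ≠ 1 := by
    intro hc
    have := orderOf_dvd_of_pow_eq_one (hδ ▸ hc)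
    rw [hγord] at this
    have := Nat.le_of_dvd (by omega) this
    omega
  have hδ0 : δ ≠ 0 := pow_ne_zero _ hγ0
  have hterm : ∀ j ∈ Finset.range m,
      -(((γ ^ (j + 1)) ^ 2) + (((γ ^ (j + 1)) ^ 2))⁻¹) = -(δ ^ (j + 1) + δ ^ (ℓ - (j + 1))) := by
    intro j hj
    rw [Finset.mem_range] at hj
    have h1 : (γ ^ (j + 1)) ^ 2 = δ ^ (j + 1) := by rw [hδ, ← pow_mul, mul_comm, pow_mul]
    have h2 : (δ ^ (j + 1))⁻¹ = δ ^ (ℓ - (j + 1)) := by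
      apply inv_eq_of_mul_eq_one_right
      rw [← pow_add]
      have : j + 1 + (ℓ - (j + 1)) = ℓ := by omega
      rw [this, hδl]
    rw [h1, h2]
  have hsum : ∑ j ∈ Finset.range m, -(((γ ^ (j + 1)) ^ 2) + (((γ ^ (j + 1)) ^ 2))⁻¹) = 1 := by
    rw [Finset.sum_congr rfl hterm, Finset.sum_neg_distrib,
      sum_s_eq_neg_one hδ1 hδl hm hm1, neg_neg]
  rw [← hsum]
  apply AddSubgroup.sum_mem
  intro j hj
  rw [Finset.mem_range] at hj
  apply AddSubgroup.subset_closure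
  refine ⟨γ ^ (j + 1), pow_ne_zero _ hγ0, ?_, rfl⟩
  rw [order_pow_helper hγord hl (by omega) (by omega)]
  exact prime_notin_bad hl h5

private lemma one_mem_of_12 (hdvd : 12 ∣ Fintype.card F - 1) :
    (1 : F) ∈ AddSubgroup.closure (ASet F) := by
  obtain ⟨γ, hγ0, hγord⟩ := exists_orderOf_eq hdvd
  have hmem : -(γ ^ 2 + (γ ^ 2)⁻¹) ∈ AddSubgroup.closure (ASet F) := by
    apply AddSubgroup.subset_closure
    refine ⟨γ, hγ0, ?_, rfl⟩
    rw [hγord]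
    intro hmem
    simp only [Set.mem_insert_iff, Set.mem_singleton_iff] at hmem
    omega
  rw [s_of_order12 hγord] at hmem
  have := AddSubgroup.neg_mem _ hmem
  rwa [neg_neg] at this

private lemma charP_of_card {p n : ℕ} (hp : p.Prime) (hcard : Fintype.card F = p ^ n) :
    CharP F p := by
  have h2 : 1 < Fintype.card F := Fintype.one_lt_card
  have hn : n ≠ 0 := by rintro rfl; simp at hcard; omega
  haveI : CharP F (ringChar F) := ringChar.charP F
  obtain ⟨m, hrp, hcard'⟩ := FiniteField.card F (ringChar F)
  have hdvd : p ∣ ringChar F ^ (m : ℕ) := by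
    rw [← hcard', hcard]
    exact dvd_pow_self p hn
  have := hp.dvd_of_dvd_pow hdvd
  have hpr : p = ringChar F := ((Nat.prime_dvd_prime_iff_eq hp hrp).mp this)
  rw [hpr]; infer_instance

/-- The generating set -/
private lemma span_SGen {p n : ℕ} (hp : p.Prime) (hpodd : Odd p)
    (hcard : Fintype.card F = p ^ n) (hq14 : p = 3 → 14 ≤ Fintype.card F) :
    AddSubgroup.closure (SGen F) = ⊤ := by
  classical
  haveI := Fact.mk hp
  haveI : CharP F p := charP_of_card hp hcard
  set q := Fintype.card F with hq
  have hq2 : 2 ≤ q := Fintype.one_lt_card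
  set M := AddSubgroup.closure (SGen F) with hM
  have hone : (1 : F) ∈ M := AddSubgroup.subset_closure (Set.mem_insert _ _)
  have hsm : ∀ γ : F, γ ≠ 0 → γ ^ 2 + (γ ^ 2)⁻¹ ∈ M := fun γ hγ =>
    AddSubgroup.subset_closure (Set.mem_insert_of_mem _ ⟨γ, hγ, rfl⟩)
  -- multiplicative closure of M
  have hmul : ∀ x ∈ M, ∀ y ∈ M, x * y ∈ M := by
    intro x hx y hy
    refine AddSubgroup.closure_induction₂ (p := fun a b _ _ => a * b ∈ M)
      ?_ ?_ ?_ ?_ ?_ ?_ ?_ hx hy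
    · -- generators
      rintro a b (rfl | ⟨γ, hγ, rfl⟩) hb
      · rcases hb with rfl | ⟨δ, hδ, rfl⟩
        · rw [one_mul]; exact hone
        · rw [one_mul]; exact hsm δ hδ
      · rcases hb with rfl | ⟨δ, hδ, rfl⟩
        · rw [mul_one]; exact hsm γ hγ
        · rw [s_mul_ident hγ hδ]
          exact AddSubgroup.add_mem _ (hsm _ (mul_ne_zero hγ hδ))
            (hsm _ (mul_ne_zero hγ (inv_ne_zero hδ)))
    · intro b _; rw [zero_mul]; exact AddSubgroup.zero_mem _
    · intro a _; rw [mul_zero]; exact AddSubgroup.zero_mem _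
    · intro a b c _ _ _ h1 h2; rw [add_mul]; exact AddSubgroup.add_mem _ h1 h2
    · intro a b c _ _ _ h1 h2; rw [mul_add]; exact AddSubgroup.add_mem _ h1 h2
    · intro a b _ _ h1; rw [neg_mul]; exact AddSubgroup.neg_mem _ h1
    · intro a b _ _ h1; rw [mul_neg]; exact AddSubgroup.neg_mem _ h1
  have hpowmem : ∀ x ∈ M, ∀ k : ℕ, x ^ k ∈ M := by
    intro x hx k
    induction k with
    | zero => simpa using hone
    | succ k ih => rw [pow_succ]; exact hmul _ ih _ hx
  have hinvmem : ∀ x ∈ M, x⁻¹ ∈ M := by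
    intro x hx
    by_cases hx0 : x = 0
    · simpa [hx0] using AddSubgroup.zero_mem M
    · have h1 : x ^ (q - 1) = 1 := FiniteField.pow_card_sub_one_eq_one x hx0
      have h2 : x * x ^ (q - 2) = 1 := by
        rw [← pow_succ']
        have : q - 2 + 1 = q - 1 := by omega
        rw [this, h1]
      rw [inv_eq_of_mul_eq_one_right h2]
      exact hpowmem x hx _
  -- K is the subfield closure
  set K := Subfield.closure (SGen F) with hK
  have hKM : ∀ x : F, x ∈ K → x ∈ M := by
    intro x hx
    refine Subfield.closure_induction (p := fun a _ => a ∈ M) ?_ ?_ ?_ ?_ ?_ ?_ hx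
    · intro a ha; exact AddSubgroup.subset_closure ha
    · exact hone
    · intro a b _ _ h1 h2; exact AddSubgroup.add_mem _ h1 h2
    · intro a _ h1; exact AddSubgroup.neg_mem _ h1
    · intro a _ h1; exact hinvmem a h1
    · intro a b _ _ h1 h2; exact hmul a h1 b h2
  -- prove K = ⊤
  have hKtop : K = ⊤ := by
    by_contra hKne
    haveI : Fintype K := Fintype.ofFinite K
    haveI : CharP K p := RingHom.charP K.subtype K.subtype.injective p
    set k := Fintype.card K with hk
    obtain ⟨d, -, hkd⟩ := FiniteField.card K p
    rw [← hk] at hkd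
    have hk3 : 3 ≤ k := by
      have hp3 : 3 ≤ p := by
        rcases hpodd with ⟨t, ht⟩
        have := hp.two_le
        omega
      calc 3 ≤ p := hp3
        _ ≤ p ^ (d : ℕ) := Nat.le_self_pow (by exact_mod_cast d.pos.ne') p
        _ = k := hkd.symm
    -- vector space dimension
    have hcard_pow : q = k ^ Module.finrank K F := Module.card_eq_pow_finrank
    have hrank2 : 2 ≤ Module.finrank K F := by
      by_contra hr
      interval_cases hr' : Module.finrank K F
      · simp at hcard_pow; omega
      · simp at hcard_pow
        -- card K = card F implies K = ⊤
        apply hKne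
        have : Nat.card K = Nat.card F := by
          rw [Nat.card_eq_fintype_card, Nat.card_eq_fintype_card, ← hk, ← hq, hcard_pow]
        have htop := AddSubgroup.eq_top_of_card_eq K.toSubring.toAddSubgroup
          (by rwa [show Nat.card K.toSubring.toAddSubgroup = Nat.card K from rfl])
        ext x
        simp only [Subfield.mem_top, iff_true]
        have : x ∈ K.toSubring.toAddSubgroup := htop ▸ AddSubgroup.mem_top x
        exact this
    have hq_ge : k * k ≤ q := by
      calc k * k = k ^ 2 := (sq k).symm
        _ ≤ k ^ Module.finrank K F := Nat.pow_le_pow_right (by omega) hrank2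
        _ = q := hcard_pow.symm
    -- Frobenius stability
    have hfrob : ∀ γ : F, γ ≠ 0 → γ ^ (2 * k - 2) = 1 ∨ γ ^ (2 * k + 2) = 1 := by
      intro γ hγ
      have hsK : γ ^ 2 + (γ ^ 2)⁻¹ ∈ K := Subfield.subset_closure (Set.mem_insert_of_mem _ ⟨γ, hγ, rfl⟩)
      have hps : (⟨_, hsK⟩ : K) ^ k = ⟨_, hsK⟩ := FiniteField.pow_card _
      have hpsF : (γ ^ 2 + (γ ^ 2)⁻¹) ^ k = γ ^ 2 + (γ ^ 2)⁻¹ := by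
        have := congrArg (Subtype.val) hps
        simpa using this
      rw [hkd, add_pow_char_pow, inv_pow, ← hkd] at hpsF

      rw [← pow_mul] at hpsF
      have hb0 : γ ^ (2 * k) ≠ 0 := pow_ne_zero _ hγ
      have hc0 : γ ^ 2 ≠ 0 := pow_ne_zero _ hγ
      rcases dichot hb0 hc0 hpsF with h | h
      · left
        have : γ ^ (2 * k - 2) * γ ^ 2 = 1 * γ ^ 2 := by
          rw [← pow_add, one_mul]
          have : 2 * k - 2 + 2 = 2 * k := by omega
          rw [this, h]
        exact mul_right_cancel₀ hc0 this
      · right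
        rw [← pow_add] at h
        exact h
    -- counting
    clear_value k q
    set S1 := Finset.univ.filter fun x : F => x ^ (2 * k - 2) = 1 with hS1
    set S2 := Finset.univ.filter fun x : F => x ^ (2 * k + 2) = 1 with hS2
    have hsub : Finset.univ.erase (0 : F) ⊆ S1 ∪ S2 := by
      intro x hxmem
      have hx0 : x ≠ 0 := (Finset.mem_erase.mp hxmem).1
      rcases hfrob x hx0 with h | h
      · exact Finset.mem_union_left _ (Finset.mem_filter.mpr ⟨Finset.mem_univ _, h⟩)
      · exact Finset.mem_union_right _ (Finset.mem_filter.mpr ⟨Finset.mem_univ _, h⟩)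
    have hcount : q - 1 ≤ (2 * k - 2) + (2 * k + 2) := by
      have h1 : (Finset.univ.erase (0 : F)).card = q - 1 := by
        rw [Finset.card_erase_of_mem (Finset.mem_univ _), Finset.card_univ, ← hq]
      calc q - 1 = (Finset.univ.erase (0 : F)).card := h1.symm
        _ ≤ (S1 ∪ S2).card := Finset.card_le_card hsub
        _ ≤ S1.card + S2.card := Finset.card_union_le _ _
        _ ≤ (2 * k - 2) + (2 * k + 2) :=
            Nat.add_le_add (card_filter_pow_le _ (by omega)) (card_filter_pow_le _ (by omega))
    -- k odd
    have hkodd : k % 2 = 1 := by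
      have h : Odd k := by rw [hkd]; exact hpodd.pow
      rcases h with ⟨t, ht⟩; omega
    -- final arithmetic
    have hq4k : q ≤ 4 * k + 1 := by clear * - hcount hk3 hq2; omega
    have hk4 : k ≤ 4 := by nlinarith [hq_ge, hq4k]
    have hk_eq3 : k = 3 := by omega
    have hp_eq3 : p = 3 := by
      have hple : p ≤ k := by
        calc p ≤ p ^ (d : ℕ) := Nat.le_self_pow (by exact_mod_cast d.pos.ne') p
          _ = k := hkd.symm
      have hp3 : 3 ≤ p := by
        rcases hpodd with ⟨t, ht⟩; have := hp.two_le; omega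
      omega
    have h14 := hq14 hp_eq3
    omega
  -- conclude
  rw [eq_top_iff]
  intro x _
  exact hKM x (hKtop ▸ Subfield.mem_top x)

private lemma msum_facts {p n q : ℕ} (hp2 : 2 ≤ p) (hpodd : Odd p) (hq : q = p ^ n)
    (hn : 2 ≤ n) (hnodd : Odd n) :
    (∑ i ∈ Finset.range n, p ^ i) ∣ q - 1 ∧ ¬ 2 ∣ (∑ i ∈ Finset.range n, p ^ i) ∧
      1 + p ≤ (∑ i ∈ Finset.range n, p ^ i) := by
  set m := ∑ i ∈ Finset.range n, p ^ i with hm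
  have hq1 : 1 ≤ q := by rw [hq]; exact Nat.one_le_pow _ _ (by omega)
  refine ⟨?_, ?_, ?_⟩
  · -- divisibility via ℤ
    have hz : ((p : ℤ) - 1) * (∑ i ∈ Finset.range n, (p : ℤ) ^ i) = (p : ℤ) ^ n - 1 := by
      rw [mul_comm]; exact geom_sum_mul (p : ℤ) n
    have hdvdz : (m : ℤ) ∣ ((q - 1 : ℕ) : ℤ) := by
      refine ⟨(p : ℤ) - 1, ?_⟩
      have hq1' : 1 ≤ p ^ n := by omega
      have hcast : ((q - 1 : ℕ) : ℤ) = (p : ℤ) ^ n - 1 := by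
        rw [hq, Nat.cast_sub hq1']; push_cast; ring
      rw [hcast, ← hz, hm]
      push_cast
      ring
    exact_mod_cast hdvdz
  · -- odd
    intro h2
    have hcast : (m : ZMod 2) = 0 := (CharP.cast_eq_zero_iff (ZMod 2) 2 m).mpr h2
    have hp1 : (p : ZMod 2) = 1 := by
      obtain ⟨t, ht⟩ := hpodd
      rw [ht]; push_cast; rw [show ((2 : ZMod 2)) = 0 by decide]; ring
    have : (m : ZMod 2) = (n : ZMod 2) := by
      rw [hm]; push_cast
      rw [Finset.sum_congr rfl (fun i _ => by rw [hp1, one_pow])]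
      simp
    obtain ⟨t, ht⟩ := hnodd
    rw [this, ht] at hcast
    push_cast at hcast
    rw [show ((2 : ZMod 2)) = 0 by decide] at hcast
    simp at hcast
  · -- size
    have : (1 : ℕ) + p = ∑ i ∈ Finset.range 2, p ^ i := by
      rw [Finset.sum_range_succ, Finset.sum_range_one]; simp [add_comm]
    rw [this, hm]
    exact Finset.sum_le_sum_of_subset (by intro i hi; simp only [Finset.mem_range] at *; omega)

private lemma NT {p n q : ℕ} (hp : p.Prime) (hpodd : Odd p) (hn : 2 ≤ n) (hq : q = p ^ n)
    (hq25 : 25 ≤ q) (hsmall : ∀ ℓ : ℕ, ℓ.Prime → ℓ ∣ q - 1 → ℓ = 2 ∨ ℓ = 3)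
    (h12 : ¬ (12 ∣ q - 1)) : False := by
  have hp2 := hp.two_le
  have hp3 : 3 ≤ p := by obtain ⟨t, ht⟩ := hpodd; omega
  have hq1 : 25 ≤ q := hq25
  have hoddpow3 : ∀ c : ℕ, c ≠ 0 → c ∣ q - 1 → ¬ 2 ∣ c → ∃ f, c = 3 ^ f := by
    intro c hc0 hcdvd hcodd
    exact ⟨_, Nat.eq_prime_pow_of_unique_prime_dvd hc0 (fun {d} hd hdc => by
      rcases hsmall d hd (hdc.trans hcdvd) with rfl | rfl
      · exact absurd hdc hcodd
      · rfl)⟩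
  by_cases h4 : 4 ∣ q - 1
  · by_cases h3 : 3 ∣ q - 1
    · exact h12 ((Nat.coprime_comm.mp (by decide)).mul_dvd_of_dvd_of_dvd h4 h3)
    · -- q - 1 is a power of 2
      obtain ⟨a, ha⟩ : ∃ a, q - 1 = 2 ^ a :=
        ⟨_, Nat.eq_prime_pow_of_unique_prime_dvd (by omega) (fun {d} hd hdvd => by
          rcases hsmall d hd hdvd with rfl | rfl
          · rfl
          · exact absurd hdvd h3)⟩
      rcases Nat.even_or_odd n with hne | hno
      · obtain ⟨c, hc⟩ := hne
        have hc1 : 1 ≤ c := by omega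
        set x := p ^ c with hx
        have hqx : q = x * x := by rw [hq, hc, pow_add]
        have hxodd : x % 2 = 1 := by
          have : Odd x := hpodd.pow
          obtain ⟨t, ht⟩ := this; omega
        have hx3 : 3 ≤ x := le_trans hp3 (Nat.le_self_pow (by omega : c ≠ 0) p)
        obtain ⟨y, hy⟩ : ∃ y, x = y + 1 := ⟨x - 1, by omega⟩
        have hyy : q - 1 = (y + 2) * y := by
          have h1 : q = (y + 1) * (y + 1) := by rw [hqx, hy]
          have e1 : (y + 1) * (y + 1) = y * y + 2 * y + 1 := by ring
          have e2 : (y + 2) * y = y * y + 2 * y := by ring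
          omega
        have hdvd1 : x + 1 ∣ q - 1 := ⟨y, by rw [hyy]; congr 1; omega⟩
        have hdvd2 : y ∣ q - 1 := ⟨y + 2, by rw [hyy]; ring⟩
        obtain ⟨i, _, hxi⟩ := (Nat.dvd_prime_pow Nat.prime_two).mp (ha ▸ hdvd1)
        obtain ⟨j, _, hyj⟩ := (Nat.dvd_prime_pow Nat.prime_two).mp (ha ▸ hdvd2)
        have hj1 : j ≠ 0 := by rintro rfl; simp at hyj; omega
        have hi2 : 2 ≤ i := by
          by_contra hi
          have : 2 ^ i ≤ 2 ^ 1 := Nat.pow_le_pow_right (by norm_num) (by omega)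
          omega
        by_cases hj : j = 1
        · rw [hj, pow_one] at hyj
          have hx3' : x = 3 := by omega
          rw [hx3'] at hqx
          norm_num at hqx
          omega
        · have hj2 : 2 ≤ j := by omega
          have h4i : (4 : ℕ) ∣ 2 ^ i := by
            have : (2 : ℕ) ^ 2 ∣ 2 ^ i := Nat.pow_dvd_pow 2 hi2
            simpa using this
          have h4j : (4 : ℕ) ∣ 2 ^ j := by
            have : (2 : ℕ) ^ 2 ∣ 2 ^ j := Nat.pow_dvd_pow 2 hj2
            simpa using this
          omega
      · obtain ⟨hdvd, hodd', hge⟩ := msum_facts hp2 hpodd hq hn hno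
        obtain ⟨j, _, hmj⟩ := (Nat.dvd_prime_pow Nat.prime_two).mp (ha ▸ hdvd)
        have hj0 : j = 0 := by
          by_contra hj
          exact hodd' (hmj ▸ dvd_pow_self 2 hj)
        rw [hj0] at hmj
        simp at hmj
        omega
  · -- ¬ 4 ∣ q - 1 : n is odd
    have hno : Odd n := by
      rw [Nat.odd_iff]
      by_contra hne'
      have hne : Even n := by rw [Nat.even_iff]; omega
      obtain ⟨c, hc⟩ := hne
      have hqx : q = p ^ c * p ^ c := by rw [hq, hc, pow_add]
      have hxodd : p ^ c % 2 = 1 := by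
        have : Odd (p ^ c) := hpodd.pow
        obtain ⟨t, ht⟩ := this; omega
      obtain ⟨t, ht⟩ : ∃ t, p ^ c = 2 * t + 1 := ⟨p ^ c / 2, by omega⟩
      have hexp : (2 * t + 1) * (2 * t + 1) = 4 * (t * t + t) + 1 := by ring
      rw [ht] at hqx
      omega
    obtain ⟨hdvd, hodd', hge⟩ := msum_facts hp2 hpodd hq hn hno
    set m := ∑ i ∈ Finset.range n, p ^ i with hm
    obtain ⟨e, he⟩ := hoddpow3 m (by omega) hdvd hodd'
    have h3m : 3 ∣ m := by
      have he1 : e ≠ 0 := by rintro rfl; simp at he; omega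
      rw [he]; exact dvd_pow_self 3 he1
    have hp3mod : p % 3 = 1 := by
      rcases (show p % 3 = 0 ∨ p % 3 = 1 ∨ p % 3 = 2 by omega) with h0 | h1 | h2
      · -- p ≡ 0 : p = 3
        exfalso
        have h3p : (3 : ℕ) ∣ p := by omega
        have hp_eq : p = 3 := ((Nat.prime_dvd_prime_iff_eq (by norm_num) hp).mp h3p).symm
        obtain ⟨k, hk⟩ : ∃ k, n = k + 1 := ⟨n - 1, by omega⟩
        have hms : m = 3 * (∑ i ∈ Finset.range k, 3 ^ i) + 1 := by
          rw [hm, hp_eq, hk, Finset.sum_range_succ']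
          simp only [pow_zero]
          rw [Finset.mul_sum]
          refine congrArg (· + 1) (Finset.sum_congr rfl fun i _ => ?_)
          rw [pow_succ']
        omega
      · exact h1
      · -- p ≡ 2 mod 3
        exfalso
        have hcast : (m : ZMod 3) = 0 := (CharP.cast_eq_zero_iff (ZMod 3) 3 m).mpr h3m
        have hpm : (p : ZMod 3) = -1 := by
          obtain ⟨t, ht⟩ : ∃ t, p = 3 * t + 2 := ⟨p / 3, by omega⟩
          rw [ht]; push_cast; rw [show ((3 : ZMod 3)) = 0 by decide]; ring_nf; decide
        have : (m : ZMod 3) = 1 := by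
          rw [hm]; push_cast
          rw [Finset.sum_congr rfl (fun i _ => by rw [hpm])]
          rw [neg_one_geom_sum]
          rw [if_neg (by rwa [Nat.not_even_iff_odd])]
        rw [this] at hcast
        exact one_ne_zero hcast
    have h3n : 3 ∣ n := by
      have hcast : (m : ZMod 3) = 0 := (CharP.cast_eq_zero_iff (ZMod 3) 3 m).mpr h3m
      have hpm : (p : ZMod 3) = 1 := by
        obtain ⟨t, ht⟩ : ∃ t, p = 3 * t + 1 := ⟨p / 3, by omega⟩
        rw [ht]; push_cast; rw [show ((3 : ZMod 3)) = 0 by decide]; ring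
      have hmn : (m : ZMod 3) = (n : ZMod 3) := by
        rw [hm]; push_cast
        rw [Finset.sum_congr rfl (fun i _ => by rw [hpm, one_pow])]
        simp
      rw [hmn] at hcast
      exact (CharP.cast_eq_zero_iff (ZMod 3) 3 n).mp hcast
    set P := p ^ (n / 3) with hP
    have hP3 : q = P ^ 3 := by
      rw [hq, hP, ← pow_mul, Nat.div_mul_cancel h3n]
    have hPge3 : 3 ≤ P := le_trans hp3 (Nat.le_self_pow (by omega) p)
    have hPodd : P % 2 = 1 := by
      have : Odd P := hpodd.pow
      obtain ⟨t, ht⟩ := this; omega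
    have hPmod : P % 3 = 1 := by
      rw [hP, Nat.pow_mod, hp3mod, one_pow]
      rfl
    set c := P * P + P + 1 with hc
    have hcdvd : c ∣ q - 1 := by
      have hdvdz : (c : ℤ) ∣ ((q - 1 : ℕ) : ℤ) := by
        refine ⟨(P : ℤ) - 1, ?_⟩
        push_cast [Nat.cast_sub (by omega : 1 ≤ q)]
        rw [hP3]
        push_cast
        rw [hc]; push_cast
        ring
      exact_mod_cast hdvdz
    have hcodd : ¬ 2 ∣ c := by
      obtain ⟨s, hs⟩ : ∃ s, P = 2 * s + 1 := ⟨P / 2, by omega⟩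
      have hexp : (2 * s + 1) * (2 * s + 1) + (2 * s + 1) + 1 = 4 * (s * s) + 6 * s + 3 := by ring
      rw [hc, hs]
      omega
    obtain ⟨f, hf⟩ := hoddpow3 c (by omega) hcdvd hcodd
    have hc9 : c % 9 = 3 := by
      obtain ⟨t, ht⟩ : ∃ t, P = 3 * t + 1 := ⟨P / 3, by omega⟩
      have hexp : (3 * t + 1) * (3 * t + 1) + (3 * t + 1) + 1 = 9 * (t * t + t) + 3 := by ring
      rw [hc, ht]
      omega
    have hc13 : 13 ≤ c := by nlinarith
    rcases Nat.lt_or_ge f 2 with hf2 | hf2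
    · have : c ≤ 3 := by
        rw [hf]
        calc 3 ^ f ≤ 3 ^ 1 := Nat.pow_le_pow_right (by norm_num) (by omega)
          _ = 3 := rfl
      omega
    · have h9 : (9 : ℕ) ∣ c := by
        rw [hf]
        have : (3 : ℕ) ^ 2 ∣ 3 ^ f := Nat.pow_dvd_pow 3 hf2
        simpa using this
      omega

private lemma exists_good (hq11 : 11 ≤ Fintype.card F) (hm1 : (-1 : F) ≠ 1) :
    ∃ γ : F, γ ≠ 0 ∧ orderOf γ ∉ ({1, 2, 3, 4, 6} : Set ℕ) ∧ γ ^ 2 + (γ ^ 2)⁻¹ ≠ 0 := by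
  classical
  set q := Fintype.card F with hq
  have horder36 : ∀ γ : F, γ ≠ 0 → orderOf γ = 3 ∨ orderOf γ = 6 →
      γ ^ 2 + (1 : F) * γ + 1 = 0 ∨ γ ^ 2 + (-1 : F) * γ + 1 = 0 := by
    intro γ hγ0 hord
    rcases hord with h | h
    · left
      have h3 : γ ^ 3 = 1 := by rw [← h]; exact pow_orderOf_eq_one γ
      have h1 : γ ≠ 1 := fun hc => by rw [hc] at h; simp at h
      have key : (γ - 1) * (γ ^ 2 + γ + 1) = 0 := by linear_combination h3
      rcases mul_eq_zero.mp key with hh | hh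
      · exact absurd (sub_eq_zero.mp hh) h1
      · linear_combination hh
    · right
      have h6 : γ ^ 6 = 1 := by rw [← h]; exact pow_orderOf_eq_one γ
      have h3ne : γ ^ 3 ≠ 1 := fun hc => by
        have := orderOf_dvd_of_pow_eq_one hc; rw [h] at this
        exact absurd this (by norm_num)
      have h2ne : γ ^ 2 ≠ 1 := fun hc => by
        have := orderOf_dvd_of_pow_eq_one hc; rw [h] at this
        exact absurd this (by norm_num)
      have h3m : γ ^ 3 = -1 := by
        have hsq : γ ^ 3 * (γ ^ 3) = 1 := by rw [← pow_add]; exact h6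
        exact (mul_self_eq_one_iff.mp hsq).resolve_left h3ne
      have hne : γ ≠ -1 := fun hc => by
        apply h2ne; rw [hc]; ring
      have key : (γ + 1) * (γ ^ 2 - γ + 1) = 0 := by linear_combination h3m
      rcases mul_eq_zero.mp key with hh | hh
      · exact absurd (by linear_combination hh : γ = -1) hne
      · linear_combination hh
  by_cases h8 : 8 ∣ q - 1
  · have hq17 : 16 ≤ q - 1 := by omega
    set Bad := (Finset.univ.filter fun x : F => x ^ 8 = 1) ∪
      ((Finset.univ.filter fun x : F => x ^ 2 + (1 : F) * x + 1 = 0) ∪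
       (Finset.univ.filter fun x : F => x ^ 2 + (-1 : F) * x + 1 = 0)) with hBad
    have hcardBad : Bad.card ≤ 12 := by
      calc Bad.card ≤ _ + _ := Finset.card_union_le _ _
        _ ≤ 8 + (2 + 2) := by
            gcongr
            · exact card_filter_pow_le 8 (by norm_num)
            · calc _ ≤ _ + _ := Finset.card_union_le _ _
                _ ≤ 2 + 2 := by
                    gcongr
                    · exact card_filter_quad_le 1 1
                    · exact card_filter_quad_le (-1) 1
    have hcard_erase : (Finset.univ.erase (0 : F)).card = q - 1 := by
      rw [Finset.card_erase_of_mem (Finset.mem_univ _), Finset.card_univ]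
    have hne : (Finset.univ.erase (0 : F) \ Bad).Nonempty := by
      rw [← Finset.card_pos]
      have := Finset.le_card_sdiff Bad (Finset.univ.erase (0 : F))
      omega
    obtain ⟨γ, hγ⟩ := hne
    rw [Finset.mem_sdiff, Finset.mem_erase] at hγ
    obtain ⟨⟨hγ0, -⟩, hγBad⟩ := hγ
    refine ⟨γ, hγ0, ?_, ?_⟩
    · intro hmem
      apply hγBad
      simp only [Set.mem_insert_iff, Set.mem_singleton_iff] at hmem
      rcases hmem with h | h | h | h | h
      · refine Finset.mem_union_left _ (Finset.mem_filter.mpr ⟨Finset.mem_univ _, ?_⟩)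
        have := pow_orderOf_eq_one γ; rw [h, pow_one] at this
        rw [this]; norm_num
      · refine Finset.mem_union_left _ (Finset.mem_filter.mpr ⟨Finset.mem_univ _, ?_⟩)
        have := pow_orderOf_eq_one γ; rw [h] at this
        rw [show (8 : ℕ) = 2 * 4 by rfl, pow_mul, this, one_pow]
      · rcases horder36 γ hγ0 (Or.inl h) with hh | hh
        · exact Finset.mem_union_right _ (Finset.mem_union_left _
            (Finset.mem_filter.mpr ⟨Finset.mem_univ _, hh⟩))
        · exact Finset.mem_union_right _ (Finset.mem_union_right _
            (Finset.mem_filter.mpr ⟨Finset.mem_univ _, hh⟩))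
      · refine Finset.mem_union_left _ (Finset.mem_filter.mpr ⟨Finset.mem_univ _, ?_⟩)
        have := pow_orderOf_eq_one γ; rw [h] at this
        rw [show (8 : ℕ) = 4 * 2 by rfl, pow_mul, this, one_pow]
      · rcases horder36 γ hγ0 (Or.inr h) with hh | hh
        · exact Finset.mem_union_right _ (Finset.mem_union_left _
            (Finset.mem_filter.mpr ⟨Finset.mem_univ _, hh⟩))
        · exact Finset.mem_union_right _ (Finset.mem_union_right _
            (Finset.mem_filter.mpr ⟨Finset.mem_univ _, hh⟩))
    · intro hzero
      apply hγBad
      refine Finset.mem_union_left _ (Finset.mem_filter.mpr ⟨Finset.mem_univ _, ?_⟩)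
      have h2 : γ ^ 2 ≠ 0 := pow_ne_zero _ hγ0
      have h4 : γ ^ 4 = -1 := by
        have := congrArg (fun z => γ ^ 2 * z) hzero
        simp only [mul_zero, mul_add, mul_inv_cancel₀ h2] at this
        have h42 : γ ^ 2 * γ ^ 2 = γ ^ 4 := by ring
        rw [h42] at this
        linear_combination this
      rw [show (8 : ℕ) = 4 * 2 by rfl, pow_mul, h4]; ring
  · -- no order-8 elements
    have hq10 : 10 ≤ q - 1 := by omega
    set Bad := (Finset.univ.filter fun x : F => x ^ 4 = 1) ∪
      ((Finset.univ.filter fun x : F => x ^ 2 + (1 : F) * x + 1 = 0) ∪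
       (Finset.univ.filter fun x : F => x ^ 2 + (-1 : F) * x + 1 = 0)) with hBad
    have hcardBad : Bad.card ≤ 8 := by
      calc Bad.card ≤ _ + _ := Finset.card_union_le _ _
        _ ≤ 4 + (2 + 2) := by
            gcongr
            · exact card_filter_pow_le 4 (by norm_num)
            · calc _ ≤ _ + _ := Finset.card_union_le _ _
                _ ≤ 2 + 2 := by
                    gcongr
                    · exact card_filter_quad_le 1 1
                    · exact card_filter_quad_le (-1) 1
    have hcard_erase : (Finset.univ.erase (0 : F)).card = q - 1 := by
      rw [Finset.card_erase_of_mem (Finset.mem_univ _), Finset.card_univ]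
    have hne : (Finset.univ.erase (0 : F) \ Bad).Nonempty := by
      rw [← Finset.card_pos]
      have := Finset.le_card_sdiff Bad (Finset.univ.erase (0 : F))
      omega
    obtain ⟨γ, hγ⟩ := hne
    rw [Finset.mem_sdiff, Finset.mem_erase] at hγ
    obtain ⟨⟨hγ0, -⟩, hγBad⟩ := hγ
    refine ⟨γ, hγ0, ?_, ?_⟩
    · intro hmem
      apply hγBad
      simp only [Set.mem_insert_iff, Set.mem_singleton_iff] at hmem
      rcases hmem with h | h | h | h | h
      · refine Finset.mem_union_left _ (Finset.mem_filter.mpr ⟨Finset.mem_univ _, ?_⟩)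
        have := pow_orderOf_eq_one γ; rw [h, pow_one] at this
        rw [this]; norm_num
      · refine Finset.mem_union_left _ (Finset.mem_filter.mpr ⟨Finset.mem_univ _, ?_⟩)
        have := pow_orderOf_eq_one γ; rw [h] at this
        rw [show (4 : ℕ) = 2 * 2 by rfl, pow_mul, this, one_pow]
      · rcases horder36 γ hγ0 (Or.inl h) with hh | hh
        · exact Finset.mem_union_right _ (Finset.mem_union_left _
            (Finset.mem_filter.mpr ⟨Finset.mem_univ _, hh⟩))
        · exact Finset.mem_union_right _ (Finset.mem_union_right _
            (Finset.mem_filter.mpr ⟨Finset.mem_univ _, hh⟩))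
      · refine Finset.mem_union_left _ (Finset.mem_filter.mpr ⟨Finset.mem_univ _, ?_⟩)
        have := pow_orderOf_eq_one γ; rw [h] at this
        exact this
      · rcases horder36 γ hγ0 (Or.inr h) with hh | hh
        · exact Finset.mem_union_right _ (Finset.mem_union_left _
            (Finset.mem_filter.mpr ⟨Finset.mem_univ _, hh⟩))
        · exact Finset.mem_union_right _ (Finset.mem_union_right _
            (Finset.mem_filter.mpr ⟨Finset.mem_univ _, hh⟩))
    · intro hzero
      exfalso
      have h2 : γ ^ 2 ≠ 0 := pow_ne_zero _ hγ0
      have h4 : γ ^ 4 = -1 := by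
        have := congrArg (fun z => γ ^ 2 * z) hzero
        simp only [mul_zero, mul_add, mul_inv_cancel₀ h2] at this
        have h42 : γ ^ 2 * γ ^ 2 = γ ^ 4 := by ring
        rw [h42] at this
        linear_combination this
      have h8' : γ ^ 8 = 1 := by
        rw [show (8 : ℕ) = 4 * 2 by rfl, pow_mul, h4]; ring
      have hdvd8 : orderOf γ ∣ 8 := orderOf_dvd_of_pow_eq_one h8'
      have henum : ∀ d : ℕ, d ∣ 8 → d = 1 ∨ d = 2 ∨ d = 4 ∨ d = 8 := by
        intro d hd
        have hle := Nat.le_of_dvd (by norm_num) hd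
        interval_cases d <;> revert hd <;> decide
      rcases henum _ hdvd8 with h | h | h | h
      · have := pow_orderOf_eq_one γ; rw [h, pow_one] at this
        rw [this] at h4; norm_num at h4
        exact hm1 h4.symm
      · have := pow_orderOf_eq_one γ; rw [h] at this
        have : γ ^ 4 = 1 := by
          rw [show (4 : ℕ) = 2 * 2 by rfl, pow_mul, this, one_pow]
        rw [h4] at this; exact hm1 this
      · have := pow_orderOf_eq_one γ; rw [h] at this
        rw [h4] at this; exact hm1 this
      · -- order 8 exists: 8 ∣ q - 1
        apply h8
        have hu : orderOf (Units.mk0 γ hγ0) = 8 := by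
          rw [← orderOf_units, Units.val_mk0, h]
        have := orderOf_dvd_card (x := Units.mk0 γ hγ0)
        rw [hu, Fintype.card_units] at this
        exact this

end Helpers

theorem neg_squares_generate (F : Type*) [Field F] [Fintype F] (p n : ℕ) (hp : p.Prime)
    (hpodd : Odd p) (hcard : Fintype.card F = p ^ n) (hbig : p ^ (n - 1) * (p - 2) > 5) :
    AddSubgroup.closure {y : F | ∃ a : F, a ≠ 0 ∧
      orderOf a ∉ ({1, 2, 3, 4, 6} : Set ℕ) ∧ y = -(a ^ 2 + (a ^ 2)⁻¹)} = ⊤ := by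
  classical
  haveI := Fact.mk hp
  haveI : CharP F p := charP_of_card hp hcard
  show AddSubgroup.closure (ASet F) = ⊤
  set H := AddSubgroup.closure (ASet F) with hH
  have hq2 : 2 ≤ Fintype.card F := Fintype.one_lt_card
  have hn1 : 1 ≤ n := by
    by_contra h
    have : n = 0 := by omega
    rw [this, pow_zero] at hcard
    omega
  have hp3 : 3 ≤ p := by obtain ⟨t, ht⟩ := hpodd; have := hp.two_le; omega
  by_cases hn2 : 2 ≤ n
  · -- n ≥ 2
    have hq25 : 25 ≤ Fintype.card F := by
      rcases eq_or_ne p 3 with rfl | hp3'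
      · have hn3 : 3 ≤ n := by
          by_contra h
          have hn_eq : n = 2 := by omega
          rw [hn_eq] at hbig
          norm_num at hbig
        calc (25 : ℕ) ≤ 3 ^ 3 := by norm_num
          _ ≤ 3 ^ n := Nat.pow_le_pow_right (by norm_num) hn3
          _ = Fintype.card F := hcard.symm
      · have hp5 : 5 ≤ p := by obtain ⟨t, ht⟩ := hpodd; omega
        calc (25 : ℕ) = 5 ^ 2 := by norm_num
          _ ≤ p ^ 2 := Nat.pow_le_pow_left hp5 2
          _ ≤ p ^ n := Nat.pow_le_pow_right (by omega) hn2
          _ = Fintype.card F := hcard.symm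
    have hone : (1 : F) ∈ H := by
      by_cases h12 : 12 ∣ Fintype.card F - 1
      · exact one_mem_of_12 h12
      by_cases hbigp : ∃ ℓ : ℕ, ℓ.Prime ∧ 5 ≤ ℓ ∧ ℓ ∣ Fintype.card F - 1
      · obtain ⟨ℓ, h1, h2, h3⟩ := hbigp
        exact one_mem_of_prime h1 h2 h3
      · exfalso
        refine NT hp hpodd hn2 hcard hq25 ?_ h12
        intro ℓ hℓ hdvd
        by_contra hcon
        push_neg at hcon
        apply hbigp
        refine ⟨ℓ, hℓ, ?_, hdvd⟩
        have h2 := hℓ.two_le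
        have h4 : ℓ ≠ 4 := by rintro rfl; exact absurd hℓ (by decide)
        omega
    have hSsub : SGen F ⊆ (H : Set F) := by
      rintro x (rfl | ⟨γ, hγ, rfl⟩)
      · exact hone
      · by_cases hbad : orderOf γ ∈ ({1, 2, 3, 4, 6} : Set ℕ)
        · rcases s_bad hbad with h | h | h
          · rw [h, show (2 : F) = 1 + 1 by norm_num]
            exact AddSubgroup.add_mem _ hone hone
          · rw [h, show (-2 : F) = -(1 + 1) by norm_num]
            exact AddSubgroup.neg_mem _ (AddSubgroup.add_mem _ hone hone)
          · rw [h]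
            exact AddSubgroup.neg_mem _ hone
        · have hy : -(γ ^ 2 + (γ ^ 2)⁻¹) ∈ H :=
            AddSubgroup.subset_closure ⟨γ, hγ, hbad, rfl⟩
          have := AddSubgroup.neg_mem _ hy
          rwa [neg_neg] at this
    have hspan := span_SGen hp hpodd hcard (fun _ => by omega)
    rw [eq_top_iff, ← hspan]
    exact (AddSubgroup.closure_le H).mpr hSsub
  · -- n = 1
    have hn_eq : n = 1 := by omega
    rw [hn_eq, pow_one] at hcard
    have hbig1 : 5 < p - 2 := by
      rw [hn_eq] at hbig
      simpa using hbig
    have hp11 : 11 ≤ p := by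
      have h9 : p ≠ 9 := by rintro rfl; exact absurd hp (by decide)
      obtain ⟨t, ht⟩ := hpodd
      omega
    haveI : Fact (2 < p) := Fact.mk (by omega)
    have hm1 : (-1 : F) ≠ 1 := CharP.neg_one_ne_one F p
    obtain ⟨γ, hγ0, hord, hs0⟩ := exists_good (by omega) hm1
    have hyH : -(γ ^ 2 + (γ ^ 2)⁻¹) ∈ H := AddSubgroup.subset_closure ⟨γ, hγ0, hord, rfl⟩
    have hy0 : -(γ ^ 2 + (γ ^ 2)⁻¹) ≠ 0 := neg_ne_zero.mpr hs0
    have hdvd : Nat.card H ∣ Nat.card F := AddSubgroup.card_addSubgroup_dvd_card H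
    rw [Nat.card_eq_fintype_card (α := F), hcard] at hdvd
    rcases hp.eq_one_or_self_of_dvd _ hdvd with h1 | h1
    · exfalso
      have hbot : H = ⊥ := AddSubgroup.card_eq_one.mp h1
      rw [hbot] at hyH
      exact hy0 (AddSubgroup.mem_bot.mp hyH)
    · exact AddSubgroup.eq_top_of_card_eq H
        (by rw [h1, Nat.card_eq_fintype_card, hcard])
end

section
/- Let F be a finite field of cardinality 3^r where r is an odd prime, and let x ∈ F^× have multiplicative order (3^r - 1)/2. Let X = {x, x³, x⁹, ..., x^{3^{r-1}}} be the Galois orbit of x. Then the product of all elements of X equals 1, and for every nonempty proper subset S ⊊ X, the product of the elements of S does not lie in F_3^× = {1, -1}. -/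
theorem galois_orbit_products (F : Type*) [Field F] [Fintype F] (r : ℕ) (hr : r.Prime)
    (hodd : Odd r) (hcard : Fintype.card F = 3 ^ r) (x : F)
    (hx : orderOf x = (3 ^ r - 1) / 2) :
    (∏ i ∈ Finset.range r, x ^ 3 ^ i) = 1 ∧
    ∀ S : Finset ℕ, S ⊆ Finset.range r → S.Nonempty → S ≠ Finset.range r →
      (∏ i ∈ S, x ^ 3 ^ i) ≠ 1 ∧ (∏ i ∈ S, x ^ 3 ^ i) ≠ -1 := by
  -- the geometric sum
  have hsum : ∀ m : ℕ, ∑ i ∈ Finset.range m, 3 ^ i = (3 ^ m - 1) / 2 := by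
    intro m
    induction m with
    | zero => simp
    | succ n ih =>
      rw [Finset.sum_range_succ, ih, pow_succ]
      have h1 : 1 ≤ 3 ^ n := Nat.one_le_pow _ _ (by norm_num)
      omega
  -- the order is odd
  have hoodd : Odd ((3 ^ r - 1) / 2) := by
    rw [← hsum r, Nat.odd_iff, Finset.sum_nat_mod]
    have : ∀ i ∈ Finset.range r, (3:ℕ) ^ i % 2 = 1 := by
      intro i _
      rw [Nat.pow_mod]
      simp
    rw [Finset.sum_congr rfl this]
    simp [Nat.odd_iff.mp hodd]
  refine ⟨?_, ?_⟩
  · rw [Finset.prod_pow_eq_pow_sum, hsum r, ← hx, pow_orderOf_eq_one]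
  · intro S hsub hne hproper
    set s := ∑ i ∈ S, 3 ^ i with hs
    have hprod : (∏ i ∈ S, x ^ 3 ^ i) = x ^ s := Finset.prod_pow_eq_pow_sum ..
    have hspos : 0 < s := by
      obtain ⟨a, ha⟩ := hne
      exact Finset.sum_pos' (fun i _ => Nat.zero_le _) ⟨a, ha, Nat.pow_pos (by norm_num)⟩
    have hslt : s < (3 ^ r - 1) / 2 := by
      rw [← hsum r]
      obtain ⟨a, ha1, ha2⟩ := Finset.exists_of_ssubset (hsub.ssubset_of_ne hproper)
      exact Finset.sum_lt_sum_of_subset hsub ha1 ha2 (Nat.pow_pos (by norm_num))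
        (fun i _ _ => Nat.zero_le _)
    have hnd : ¬ orderOf x ∣ s := by
      intro h
      have := Nat.le_of_dvd hspos h
      omega
    constructor
    · rw [hprod]
      intro h
      exact hnd (orderOf_dvd_of_pow_eq_one h)
    · rw [hprod]
      intro h
      have h2 : x ^ (2 * s) = 1 := by
        rw [mul_comm, pow_mul, h]; ring
      have hdvd : orderOf x ∣ 2 * s := orderOf_dvd_of_pow_eq_one h2
      rw [hx] at hdvd
      have hcop : Nat.Coprime ((3 ^ r - 1) / 2) 2 :=
        Nat.Coprime.symm (Nat.coprime_two_left.mpr hoodd)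
      have : ((3 ^ r - 1) / 2) ∣ s := hcop.dvd_of_dvd_mul_left hdvd
      have := Nat.le_of_dvd hspos this
      omega
end
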